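/- For every ρ₊ > 0 there exists a constant c > 0 such that Z(e·φ) ≤ Z(φ) · e^{c·R(φ)} for every φ ≥ 0 with R(φ) ≤ ρ₊. Consequently, if X₁, …, Xₙ are independent random variables each with distribution ν_φ and R(φ) = ρ ≤ ρ₊, then for all t ≥ 0, P[Σ_{k=1}^n X_k ≥ cρn + t] ≤ e^{−t}. -/

import Mathlib

open MeasureTheory ProbabilityTheory

/-- The "generalized factorial" `g(k)! = g(k) ⋯ g(1)`, with `g(0)! = 1`. -/
noncomputable def gFact (g : ℕ → ℝ) : ℕ → ℝ
  | 0 => 1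
  | n + 1 => g (n + 1) * gFact g n

/-- The partition function `Z(φ) = Σ_{k=0}^∞ φ^k / g(k)!`. -/
noncomputable def Zfun (g : ℕ → ℝ) (φ : ℝ) : ℝ := ∑' k : ℕ, φ ^ k / gFact g k

/-- The measure `ν_φ` on `ℕ`, given by `ν_φ(k) = φ^k / (g(k)!·Z(φ))`.
For `φ = 0` this is the Dirac mass at `0`. -/
noncomputable def nuMeasure (g : ℕ → ℝ) (φ : ℝ) : Measure ℕ :=
  Measure.sum fun k =>
    (ENNReal.ofReal (φ ^ k / (gFact g k * Zfun g φ))) • Measure.dirac k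

/-- The mean `R(φ) = (1/Z(φ)) Σ_{k=0}^∞ k φ^k / g(k)!` of `ν_φ`. -/
noncomputable def Rfun (g : ℕ → ℝ) (φ : ℝ) : ℝ :=
  (∑' k : ℕ, (k : ℝ) * φ ^ k / gFact g k) / Zfun g φ

/-!
Since `g k ≥ Γ₋ k`, we have `g(k)! ≥ Γ₋ᵏ k!`, so `Z(eφ) ≤ exp(eφ/Γ₋)` by comparison with the
exponential series. Shifting the index in the series for `R(φ)` and using `g k ≤ Γ₊ k` gives
`φ ≤ Γ₊ R(φ)`. As `Z(φ) ≥ 1`, this yields `Z(eφ) ≤ Z(φ) exp(c R(φ))` with `c = eΓ₊/Γ₋` for every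
`φ ≥ 0`. The tail bound is then Chernoff's inequality at parameter `1`, since the moment
generating function of `ν_φ` at `1` is `Z(eφ)/Z(φ)`.
-/

open Real Finset

section Growth

variable {g : ℕ → ℝ} {a b : ℝ}

lemma mul_le_of_le_sub_succ (h0 : g 0 = 0) (h : ∀ k, a ≤ g (k + 1) - g k) (n : ℕ) :
    a * n ≤ g n := by
  induction n with
  | zero => simp [h0]
  | succ n ih => push_cast; linarith [h n]

lemma le_mul_of_sub_succ_le (h0 : g 0 = 0) (h : ∀ k, g (k + 1) - g k ≤ b) (n : ℕ) :
    g n ≤ b * n := by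
  induction n with
  | zero => simp [h0]
  | succ n ih => push_cast; linarith [h n]

lemma pow_mul_factorial_le_gFact (ha : 0 ≤ a) (hlow : ∀ k : ℕ, a * k ≤ g k) (n : ℕ) :
    a ^ n * n.factorial ≤ gFact g n := by
  induction n with
  | zero => simp [gFact]
  | succ n ih =>
    calc a ^ (n + 1) * (n + 1).factorial = (a * (n + 1 : ℕ)) * (a ^ n * n.factorial) := by
          rw [Nat.factorial_succ]; push_cast; ring
      _ ≤ g (n + 1) * gFact g n := by
          gcongr
          exacts [(by positivity : (0 : ℝ) ≤ a * (n + 1 : ℕ)).trans (hlow _), hlow _]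

lemma gFact_pos (ha : 0 < a) (hlow : ∀ k : ℕ, a * k ≤ g k) (n : ℕ) : 0 < gFact g n :=
  (by positivity : (0 : ℝ) < a ^ n * n.factorial).trans_le
    (pow_mul_factorial_le_gFact ha.le hlow n)

lemma pow_div_gFact_le (ha : 0 < a) (hlow : ∀ k : ℕ, a * k ≤ g k) {φ : ℝ} (hφ : 0 ≤ φ)
    (n : ℕ) : φ ^ n / gFact g n ≤ (φ / a) ^ n / n.factorial := by
  rw [div_pow, div_div]
  exact div_le_div_of_nonneg_left (by positivity) (by positivity)
    (pow_mul_factorial_le_gFact ha.le hlow n)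

lemma summable_pow_div_gFact (ha : 0 < a) (hlow : ∀ k : ℕ, a * k ≤ g k) (φ : ℝ) :
    Summable fun n => φ ^ n / gFact g n := by
  refine Summable.of_norm_bounded (Real.summable_pow_div_factorial (|φ| / a)) fun n => ?_
  rw [norm_div, norm_pow, Real.norm_eq_abs, Real.norm_of_nonneg (gFact_pos ha hlow n).le]
  exact pow_div_gFact_le ha hlow (abs_nonneg φ) n

lemma summable_natCast_mul_pow_div_gFact (ha : 0 < a) (hlow : ∀ k : ℕ, a * k ≤ g k) (φ : ℝ) :
    Summable fun n : ℕ => (n : ℝ) * φ ^ n / gFact g n := by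
  refine Summable.of_norm_bounded (summable_pow_div_gFact ha hlow (2 * |φ|)) fun n => ?_
  have hn : (n : ℝ) ≤ 2 ^ n := by exact_mod_cast n.lt_two_pow_self.le
  rw [norm_div, norm_mul, norm_pow, Real.norm_eq_abs, Real.norm_eq_abs, Nat.abs_cast,
    Real.norm_of_nonneg (gFact_pos ha hlow n).le, mul_pow]
  gcongr
  exact (gFact_pos ha hlow n).le

end Growth

section PartitionFunction

variable {g : ℕ → ℝ} {a b φ : ℝ}

lemma one_le_Zfun (ha : 0 < a) (hlow : ∀ k : ℕ, a * k ≤ g k) (hφ : 0 ≤ φ) : 1 ≤ Zfun g φ := by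
  simpa [Zfun, gFact] using (summable_pow_div_gFact ha hlow φ).le_tsum 0
    fun n _ => div_nonneg (pow_nonneg hφ n) (gFact_pos ha hlow n).le

lemma Zfun_le_exp_div (ha : 0 < a) (hlow : ∀ k : ℕ, a * k ≤ g k) (hφ : 0 ≤ φ) :
    Zfun g φ ≤ exp (φ / a) := by
  rw [Real.exp_eq_exp_ℝ]
  exact hasSum_le (pow_div_gFact_le ha hlow hφ) (summable_pow_div_gFact ha hlow φ).hasSum
    (NormedSpace.expSeries_div_hasSum_exp (φ / a))

lemma le_mul_Rfun (ha : 0 < a) (hlow : ∀ k : ℕ, a * k ≤ g k) (hup : ∀ k : ℕ, g k ≤ b * k)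
    (hφ : 0 ≤ φ) : φ ≤ b * Rfun g φ := by
  have hZ : 0 < Zfun g φ := zero_lt_one.trans_le (one_le_Zfun ha hlow hφ)
  have hR := summable_natCast_mul_pow_div_gFact ha hlow φ
  have hterm (k : ℕ) : φ ^ (k + 1) / gFact g k
      ≤ b * (((k + 1 : ℕ) : ℝ) * φ ^ (k + 1) / gFact g (k + 1)) := by
    have hgk : 0 < g (k + 1) := by
      have := hlow (k + 1); push_cast at this ⊢; nlinarith
    calc φ ^ (k + 1) / gFact g k = g (k + 1) * (φ ^ (k + 1) / gFact g (k + 1)) := by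
          simp only [gFact]; field_simp
      _ ≤ (b * (k + 1 : ℕ)) * (φ ^ (k + 1) / gFact g (k + 1)) := by
          gcongr; exacts [div_nonneg (by positivity) (gFact_pos ha hlow _).le, hup _]
      _ = _ := by ring
  suffices φ * Zfun g φ ≤ b * ∑' n : ℕ, (n : ℝ) * φ ^ n / gFact g n by
    rw [Rfun, mul_div_assoc', le_div_iff₀ hZ]; exact this
  calc φ * Zfun g φ = ∑' k : ℕ, φ ^ (k + 1) / gFact g k := by
        rw [Zfun, ← tsum_mul_left]; congr 1 with k; ring
    _ ≤ ∑' k : ℕ, b * (((k + 1 : ℕ) : ℝ) * φ ^ (k + 1) / gFact g (k + 1)) :=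
        Summable.tsum_le_tsum hterm
          (((summable_pow_div_gFact ha hlow φ).mul_left φ).congr fun k => by ring)
          (((summable_nat_add_iff 1).2 hR).mul_left b)
    _ = b * ∑' n : ℕ, (n : ℝ) * φ ^ n / gFact g n := by
        rw [tsum_mul_left, hR.tsum_eq_zero_add]; simp

lemma Zfun_exp_one_mul_le (ha : 0 < a) (hlow : ∀ k : ℕ, a * k ≤ g k)
    (hup : ∀ k : ℕ, g k ≤ b * k) (hφ : 0 ≤ φ) :
    Zfun g (exp 1 * φ) ≤ Zfun g φ * exp (exp 1 * b / a * Rfun g φ) := by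
  calc Zfun g (exp 1 * φ) ≤ exp (exp 1 * φ / a) := Zfun_le_exp_div ha hlow (by positivity)
    _ ≤ exp (exp 1 * b / a * Rfun g φ) := by
        rw [exp_le_exp, div_mul_eq_mul_div, mul_assoc]
        gcongr
        exact le_mul_Rfun ha hlow hup hφ
    _ ≤ Zfun g φ * exp (exp 1 * b / a * Rfun g φ) :=
        le_mul_of_one_le_left (exp_pos _).le (one_le_Zfun ha hlow hφ)

end PartitionFunction

lemma measure_sum_ge_le_exp_of_mgf_le {Ω ι : Type*} [MeasurableSpace Ω] [Fintype ι]
    {P : Measure Ω} {Y : ι → Ω → ℝ} (hmeas : ∀ i, Measurable (Y i)) (hind : iIndepFun Y P)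
    {t m : ℝ} (ht : 0 ≤ t) (hint : ∀ i, Integrable (fun ω => exp (t * Y i ω)) P)
    (hmgf : ∀ i, mgf (Y i) P t ≤ exp (t * m)) (s : ℝ) :
    P.real {ω | m * Fintype.card ι + s ≤ ∑ i, Y i ω} ≤ exp (-t * s) := by
  have := hind.isProbabilityMeasure
  have hsum : {ω | m * Fintype.card ι + s ≤ ∑ i, Y i ω}
      = {ω | m * Fintype.card ι + s ≤ (∑ i, Y i) ω} := by
    simp only [Finset.sum_apply]
  calc P.real {ω | m * Fintype.card ι + s ≤ ∑ i, Y i ω}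
      ≤ exp (-t * (m * Fintype.card ι + s)) * mgf (∑ i, Y i) P t := by
        rw [hsum]
        exact measure_ge_le_exp_mul_mgf _ ht (hind.integrable_exp_mul_sum hmeas fun i _ => hint i)
    _ = exp (-t * (m * Fintype.card ι + s)) * ∏ i, mgf (Y i) P t := by
        rw [hind.mgf_sum hmeas]
    _ ≤ exp (-t * (m * Fintype.card ι + s)) * ∏ _i : ι, exp (t * m) := by
        gcongr with i
        · exact fun _ _ => mgf_nonneg
        · exact hmgf i
    _ = exp (-t * s) := by
        rw [prod_const, card_univ, ← exp_nat_mul, ← exp_add]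
        ring_nf

section Distribution

variable {g : ℕ → ℝ} {a φ : ℝ}

lemma toReal_nuMeasure_weight_mul_norm_exp (ha : 0 < a) (hlow : ∀ k : ℕ, a * k ≤ g k)
    (hφ : 0 ≤ φ) (k : ℕ) :
    (ENNReal.ofReal (φ ^ k / (gFact g k * Zfun g φ))).toReal * ‖exp (k : ℝ)‖
      = (exp 1 * φ) ^ k / gFact g k / Zfun g φ := by
  have := gFact_pos ha hlow k
  have := one_le_Zfun ha hlow hφ
  rw [ENNReal.toReal_ofReal (by positivity), Real.norm_of_nonneg (exp_pos _).le, mul_pow,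
    ← exp_one_pow]
  ring

lemma integrable_exp_nuMeasure (ha : 0 < a) (hlow : ∀ k : ℕ, a * k ≤ g k) (hφ : 0 ≤ φ) :
    Integrable (fun k : ℕ => exp (k : ℝ)) (nuMeasure g φ) :=
  integrable_sum_dirac (fun _ => ENNReal.ofReal_ne_top) <|
    ((summable_pow_div_gFact ha hlow _).div_const _).congr fun k =>
      (toReal_nuMeasure_weight_mul_norm_exp ha hlow hφ k).symm

lemma integral_exp_nuMeasure (ha : 0 < a) (hlow : ∀ k : ℕ, a * k ≤ g k) (hφ : 0 ≤ φ) :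
    ∫ k : ℕ, exp (k : ℝ) ∂nuMeasure g φ = Zfun g (exp 1 * φ) / Zfun g φ := by
  have hsum := (summable_pow_div_gFact ha hlow (exp 1 * φ)).hasSum.div_const (Zfun g φ)
  refine (hasSum_integral_sum_dirac (fun _ => ENNReal.ofReal_ne_top) ?_).unique ?_
  · simp_rw [toReal_nuMeasure_weight_mul_norm_exp ha hlow hφ]
    exact hsum.summable
  · refine hsum.congr_fun fun k => ?_
    rw [smul_eq_mul, ← Real.norm_of_nonneg (exp_pos (k : ℝ)).le,
      toReal_nuMeasure_weight_mul_norm_exp ha hlow hφ]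

variable {Ω : Type*} [MeasurableSpace Ω] {P : Measure Ω} {X : Ω → ℕ}

lemma integrable_exp_of_map_eq_nuMeasure (ha : 0 < a) (hlow : ∀ k : ℕ, a * k ≤ g k)
    (hφ : 0 ≤ φ) (hX : Measurable X) (hmap : P.map X = nuMeasure g φ) :
    Integrable (fun ω => exp (1 * (X ω : ℝ))) P := by
  simp only [one_mul]
  refine (integrable_map_measure (g := fun k : ℕ => exp (k : ℝ))
    (measurable_of_countable _).aestronglyMeasurable hX.aemeasurable).1 ?_
  rw [hmap]
  exact integrable_exp_nuMeasure ha hlow hφ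

lemma mgf_one_of_map_eq_nuMeasure (ha : 0 < a) (hlow : ∀ k : ℕ, a * k ≤ g k)
    (hφ : 0 ≤ φ) (hX : Measurable X) (hmap : P.map X = nuMeasure g φ) :
    mgf (fun ω => (X ω : ℝ)) P 1 = Zfun g (exp 1 * φ) / Zfun g φ := by
  calc mgf (fun ω => (X ω : ℝ)) P 1 = ∫ ω, exp (X ω : ℝ) ∂P := by simp only [mgf, one_mul]
    _ = ∫ k : ℕ, exp (k : ℝ) ∂P.map X :=
        (integral_map (f := fun k : ℕ => exp (k : ℝ)) hX.aemeasurable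
          (measurable_of_countable _).aestronglyMeasurable).symm
    _ = Zfun g (exp 1 * φ) / Zfun g φ := by rw [hmap, integral_exp_nuMeasure ha hlow hφ]

end Distribution

theorem zrp_large_deviation_constant_general
    (g : ℕ → ℝ) (Γm Γp : ℝ)
    (hΓm : 0 < Γm) (hΓp : 1 ≤ Γp)
    (hg0 : g 0 = 0)
    (hg : ∀ k : ℕ, 1 ≤ k → Γm ≤ g k - g (k - 1) ∧ g k - g (k - 1) ≤ Γp)
    (ρp : ℝ) :
    ∃ c : ℝ, 0 < c ∧
      (∀ φ : ℝ, 0 ≤ φ → Rfun g φ ≤ ρp →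
        Zfun g (Real.exp 1 * φ) ≤ Zfun g φ * Real.exp (c * Rfun g φ)) ∧
      (∀ φ : ℝ, 0 ≤ φ → Rfun g φ ≤ ρp → ∀ n : ℕ,
        ∀ (Ω : Type) (_ : MeasurableSpace Ω) (P : Measure Ω), IsProbabilityMeasure P →
        ∀ X : Fin n → Ω → ℕ, (∀ i, Measurable (X i)) →
          iIndepFun X P →
          (∀ i, Measure.map (X i) P = nuMeasure g φ) →
          ∀ t : ℝ, 0 ≤ t →
          P {ω | c * Rfun g φ * n + t ≤ ∑ i, (X i ω : ℝ)} ≤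
            ENNReal.ofReal (Real.exp (-t))) := by
  have hlow : ∀ k : ℕ, Γm * k ≤ g k :=
    mul_le_of_le_sub_succ hg0 fun k => by simpa using (hg (k + 1) k.succ_pos).1
  have hup : ∀ k : ℕ, g k ≤ Γp * k :=
    le_mul_of_sub_succ_le hg0 fun k => by simpa using (hg (k + 1) k.succ_pos).2
  have hZ : ∀ φ, 0 ≤ φ → Zfun g (exp 1 * φ) ≤ Zfun g φ * exp (exp 1 * Γp / Γm * Rfun g φ) :=
    fun φ hφ => Zfun_exp_one_mul_le hΓm hlow hup hφ
  have hc : 0 < exp 1 * Γp / Γm := by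
    have : 0 < Γp := by linarith
    positivity
  refine ⟨exp 1 * Γp / Γm, hc, fun φ hφ _ => hZ φ hφ, ?_⟩
  intro φ hφ _ n Ω _ P _ X hX hind hmap t _
  have hmgf (i : Fin n) :
      mgf (fun ω => (X i ω : ℝ)) P 1 ≤ exp (1 * (exp 1 * Γp / Γm * Rfun g φ)) := by
    rw [mgf_one_of_map_eq_nuMeasure hΓm hlow hφ (hX i) (hmap i), one_mul,
      div_le_iff₀ (zero_lt_one.trans_le (one_le_Zfun hΓm hlow hφ))]
    exact (hZ φ hφ).trans_eq (mul_comm _ _)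
  have hchernoff := measure_sum_ge_le_exp_of_mgf_le (Y := fun i ω => (X i ω : ℝ))
    (fun i => (measurable_of_countable _).comp (hX i))
    (hind.comp _ fun _ => measurable_of_countable _)
    zero_le_one (fun i => integrable_exp_of_map_eq_nuMeasure hΓm hlow hφ (hX i) (hmap i))
    hmgf t
  rw [← ofReal_measureReal]
  gcongr
  simpa using hchernoff

/-- there is `c > 0` with `Z(e·φ) ≤ Z(φ)·e^{c·R(φ)}` whenever
`R(φ) ≤ ρ₊`; consequently, for `n` i.i.d. variables with law `ν_φ` and density
`ρ = R(φ) ≤ ρ₊`, `P[Σ X_k ≥ cρn + t] ≤ e^{−t}` for all `t ≥ 0`. -/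
theorem zrp_large_deviation_constant
    (g : ℕ → ℝ) (Γm Γp : ℝ)
    (hΓm : 0 < Γm) (hΓm1 : Γm ≤ 1) (hΓp : 1 ≤ Γp)
    (hg0 : g 0 = 0)
    (hg : ∀ k : ℕ, 1 ≤ k → Γm ≤ g k - g (k - 1) ∧ g k - g (k - 1) ≤ Γp)
    (ρp : ℝ) (hρp : 0 < ρp) :
    ∃ c : ℝ, 0 < c ∧
      (∀ φ : ℝ, 0 ≤ φ → Rfun g φ ≤ ρp →
        Zfun g (Real.exp 1 * φ) ≤ Zfun g φ * Real.exp (c * Rfun g φ)) ∧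
      (∀ φ : ℝ, 0 ≤ φ → Rfun g φ ≤ ρp → ∀ n : ℕ,
        ∀ (Ω : Type) (_ : MeasurableSpace Ω) (P : Measure Ω), IsProbabilityMeasure P →
        ∀ X : Fin n → Ω → ℕ, (∀ i, Measurable (X i)) →
          iIndepFun X P →
          (∀ i, Measure.map (X i) P = nuMeasure g φ) →
          ∀ t : ℝ, 0 ≤ t →
          P {ω | c * Rfun g φ * n + t ≤ ∑ i, (X i ω : ℝ)} ≤
            ENNReal.ofReal (Real.exp (-t))) :=
  zrp_large_deviation_constant_general g Γm Γp hΓm hΓp hg0 hg ρp
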